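/- Let q > 0 and define L(a) = ∫_1^∞ (v^{2q} − 1)^{−1/2} · sinh(a) · (1 + v² sinh(a)²)^{−1/2} dv for a > 0. Then L is differentiable on (0, ∞) with L'(a) = cosh(a) · ∫_1^∞ (v^{2q} − 1)^{−1/2} · (1 + v² sinh(a)²)^{−3/2} dv > 0. In particular L is strictly increasing on (0, ∞). -/

import Mathlib

/-!
Differentiate under the integral sign. For `x ∈ (a/2, 3a/2)` the `x`-derivative
`cosh x (1 + v² sinh² x)^{-3/2}` of `sinh x (1 + v² sinh² x)^{-1/2}` is dominated by
`cosh (3a/2) (1 + v² sinh² (a/2))^{-3/2}`. Against the weight `(v^{2q} - 1)^{-1/2}`, every factor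
`(1 + v² s²)^r` with `s ≠ 0`, `r ≤ 0`, `2r < q - 1` is integrable on `(1, ∞)`: near `v = 1` the weight is
`O((v - 1)^{-1/2})`, and at infinity the product is `O(v^{2r-q})`. The derivative is the integral of a
positive function, hence positive.
-/

/-- The half-height of the r-catenoid with neck radius `a` in `ℍⁿ × ℝ`. -/
noncomputable def catL (q a : ℝ) : ℝ :=
  ∫ v in Set.Ioi (1 : ℝ),
    (v ^ (2 * q) - 1) ^ (-(1 : ℝ) / 2) * Real.sinh a *
      (1 + v ^ 2 * Real.sinh a ^ 2) ^ (-(1 : ℝ) / 2)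

open MeasureTheory Set Real

noncomputable def catLDeriv (q a : ℝ) : ℝ :=
  cosh a * ∫ v in Ioi (1 : ℝ),
    (v ^ (2 * q) - 1) ^ (-(1 : ℝ) / 2) * (1 + v ^ 2 * sinh a ^ 2) ^ (-(3 : ℝ) / 2)

lemma mul_one_sub_inv_le_rpow_sub_one {p v : ℝ} (hp : 0 ≤ p) (hv : 0 < v) :
    p * (1 - v⁻¹) ≤ v ^ p - 1 := by
  have hexp : p * log v + 1 ≤ v ^ p := by
    rw [rpow_def_of_pos hv, mul_comm (log v)]
    exact add_one_le_exp _
  nlinarith [one_sub_inv_le_log_of_pos hv]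

section Weight

variable {q : ℝ}

lemma rpow_two_mul_sub_one_pos (hq : 0 < q) {v : ℝ} (hv : 1 < v) : 0 < v ^ (2 * q) - 1 :=
  sub_pos.2 (one_lt_rpow hv (by positivity))

lemma rpow_two_mul_sub_one_rpow_le_of_le_two (hq : 0 < q) {v : ℝ} (hv : 1 < v) (hv2 : v ≤ 2) :
    (v ^ (2 * q) - 1) ^ (-(1 : ℝ) / 2) ≤ q ^ (-(1 : ℝ) / 2) * (v - 1) ^ (-(1 : ℝ) / 2) := by
  have hlower : q * (v - 1) ≤ v ^ (2 * q) - 1 := by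
    have h := mul_one_sub_inv_le_rpow_sub_one (p := 2 * q) (by positivity) (by linarith : 0 < v)
    have hfrac : (v - 1) / 2 ≤ 1 - v⁻¹ := by
      rw [show 1 - v⁻¹ = (v - 1) / v by field_simp]
      exact div_le_div_of_nonneg_left (by linarith) (by linarith) hv2
    nlinarith
  rw [← mul_rpow hq.le (by linarith)]
  exact rpow_le_rpow_of_nonpos (by nlinarith) hlower (by norm_num)

lemma rpow_two_mul_sub_one_rpow_le_of_two_le (hq : 0 < q) {v : ℝ} (hv : 2 ≤ v) :
    (v ^ (2 * q) - 1) ^ (-(1 : ℝ) / 2) ≤ (1 - 2 ^ (-(2 * q))) ^ (-(1 : ℝ) / 2) * v ^ (-q) := by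
  have hv0 : 0 < v := by linarith
  have hc : 0 < 1 - (2 : ℝ) ^ (-(2 * q)) :=
    sub_pos.2 (rpow_lt_one_of_one_lt_of_neg (by norm_num) (by linarith))
  have hlower : (1 - 2 ^ (-(2 * q))) * v ^ (2 * q) ≤ v ^ (2 * q) - 1 := by
    have h : (1 : ℝ) ≤ 2 ^ (-(2 * q)) * v ^ (2 * q) := by
      rw [rpow_neg zero_le_two, inv_mul_eq_div, one_le_div (by positivity)]
      exact rpow_le_rpow zero_le_two hv (by positivity)
    linarith
  calc (v ^ (2 * q) - 1) ^ (-(1 : ℝ) / 2)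
      ≤ ((1 - 2 ^ (-(2 * q))) * v ^ (2 * q)) ^ (-(1 : ℝ) / 2) :=
        rpow_le_rpow_of_nonpos (by positivity) hlower (by norm_num)
    _ = (1 - 2 ^ (-(2 * q))) ^ (-(1 : ℝ) / 2) * v ^ (-q) := by
        rw [mul_rpow hc.le (by positivity), ← rpow_mul hv0.le]
        ring_nf

variable {s r : ℝ}

lemma integrableOn_Ioc_weight_mul_rpow (hq : 0 < q) (hr : r ≤ 0) :
    IntegrableOn (fun v : ℝ => (v ^ (2 * q) - 1) ^ (-(1 : ℝ) / 2) * (1 + v ^ 2 * s ^ 2) ^ r)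
      (Ioc 1 2) := by
  have hdom :
      IntegrableOn (fun v : ℝ => q ^ (-(1 : ℝ) / 2) * (v - 1) ^ (-(1 : ℝ) / 2)) (Ioc 1 2) := by
    have h := (intervalIntegral.intervalIntegrable_rpow' (a := 0) (b := 1)
      (r := -(1 : ℝ) / 2) (by norm_num)).comp_sub_right 1
    simp only [zero_add, one_add_one_eq_two] at h
    exact ((intervalIntegrable_iff_integrableOn_Ioc_of_le one_le_two).1 h).const_mul _
  refine hdom.mono' (by fun_prop) ((ae_restrict_iff' measurableSet_Ioc).2 (.of_forall ?_))
  rintro v ⟨hv1, hv2⟩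
  have hw := rpow_two_mul_sub_one_pos hq hv1
  rw [norm_of_nonneg (by positivity)]
  calc (v ^ (2 * q) - 1) ^ (-(1 : ℝ) / 2) * (1 + v ^ 2 * s ^ 2) ^ r
      ≤ (v ^ (2 * q) - 1) ^ (-(1 : ℝ) / 2) * 1 := by
        gcongr
        exact rpow_le_one_of_one_le_of_nonpos (le_add_of_nonneg_right (by positivity)) hr
    _ ≤ q ^ (-(1 : ℝ) / 2) * (v - 1) ^ (-(1 : ℝ) / 2) := by
        rw [mul_one]
        exact rpow_two_mul_sub_one_rpow_le_of_le_two hq hv1 hv2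

lemma integrableOn_Ioi_two_weight_mul_rpow (hq : 0 < q) (hs : s ≠ 0) (hr : r ≤ 0)
    (hrq : 2 * r < q - 1) :
    IntegrableOn (fun v : ℝ => (v ^ (2 * q) - 1) ^ (-(1 : ℝ) / 2) * (1 + v ^ 2 * s ^ 2) ^ r)
      (Ioi 2) := by
  set C := (1 - (2 : ℝ) ^ (-(2 * q))) ^ (-(1 : ℝ) / 2) * (s ^ 2) ^ r
  have hdom : IntegrableOn (fun v : ℝ => C * v ^ (-q + 2 * r)) (Ioi 2) :=
    (integrableOn_Ioi_rpow_of_lt (by linarith) two_pos).const_mul C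
  refine hdom.mono' (by fun_prop) ((ae_restrict_iff' measurableSet_Ioi).2 (.of_forall ?_))
  intro v (hv : 2 < v)
  have hv0 : 0 < v := by linarith
  have hw := rpow_two_mul_sub_one_pos hq (by linarith : 1 < v)
  have hdecay : (1 + v ^ 2 * s ^ 2) ^ r ≤ (s ^ 2) ^ r * v ^ (2 * r) := by
    calc (1 + v ^ 2 * s ^ 2) ^ r ≤ (v ^ 2 * s ^ 2) ^ r :=
          rpow_le_rpow_of_nonpos (by positivity) (by linarith) hr
      _ = (s ^ 2) ^ r * v ^ (2 * r) := by
          rw [mul_rpow (by positivity) (by positivity), rpow_mul hv0.le, ← rpow_natCast]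
          push_cast
          ring
  have hweight := rpow_two_mul_sub_one_rpow_le_of_two_le hq hv.le
  rw [norm_of_nonneg (by positivity)]
  calc (v ^ (2 * q) - 1) ^ (-(1 : ℝ) / 2) * (1 + v ^ 2 * s ^ 2) ^ r
      ≤ ((1 - 2 ^ (-(2 * q))) ^ (-(1 : ℝ) / 2) * v ^ (-q)) * ((s ^ 2) ^ r * v ^ (2 * r)) :=
        mul_le_mul hweight hdecay (by positivity) ((rpow_nonneg hw.le _).trans hweight)
    _ = C * v ^ (-q + 2 * r) := by
        rw [rpow_add hv0]
        ring

lemma integrableOn_weight_mul_rpow (hq : 0 < q) (hs : s ≠ 0) (hr : r ≤ 0)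
    (hrq : 2 * r < q - 1) :
    IntegrableOn (fun v : ℝ => (v ^ (2 * q) - 1) ^ (-(1 : ℝ) / 2) * (1 + v ^ 2 * s ^ 2) ^ r)
      (Ioi 1) := by
  rw [← Ioc_union_Ioi_eq_Ioi one_le_two]
  exact (integrableOn_Ioc_weight_mul_rpow hq hr).union
    (integrableOn_Ioi_two_weight_mul_rpow hq hs hr hrq)

lemma integral_weight_mul_rpow_pos (hq : 0 < q) (hs : s ≠ 0) (hr : r ≤ 0)
    (hrq : 2 * r < q - 1) :
    0 < ∫ v in Ioi (1 : ℝ), (v ^ (2 * q) - 1) ^ (-(1 : ℝ) / 2) * (1 + v ^ 2 * s ^ 2) ^ r := by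
  have hpos : ∀ v ∈ Ioi (1 : ℝ),
      0 < (v ^ (2 * q) - 1) ^ (-(1 : ℝ) / 2) * (1 + v ^ 2 * s ^ 2) ^ r := fun v hv => by
    have := rpow_two_mul_sub_one_pos hq hv
    positivity
  rw [setIntegral_pos_iff_support_of_nonneg_ae
    ((ae_restrict_iff' measurableSet_Ioi).2 (.of_forall fun v hv => (hpos v hv).le))
    (integrableOn_weight_mul_rpow hq hs hr hrq)]
  refine lt_of_lt_of_le ?_ (measure_mono fun v hv => ⟨(hpos v hv).ne', hv⟩)
  simp [volume_Ioi]

end Weight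

lemma hasDerivAt_sinh_mul_one_add_mul_sinh_sq_rpow {c : ℝ} (hc : 0 ≤ c) (x : ℝ) :
    HasDerivAt (fun a => sinh a * (1 + c * sinh a ^ 2) ^ (-(1 : ℝ) / 2))
      (cosh x * (1 + c * sinh x ^ 2) ^ (-(3 : ℝ) / 2)) x := by
  have hU : 0 < 1 + c * sinh x ^ 2 := by positivity
  have hinner : HasDerivAt (fun a => 1 + c * sinh a ^ 2) (c * (2 * sinh x * cosh x)) x := by
    simpa using (((hasDerivAt_sinh x).pow 2).const_mul c).const_add 1
  refine ((hasDerivAt_sinh x).mul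
    (hinner.rpow_const (p := -(1 : ℝ) / 2) (.inl hU.ne'))).congr_deriv ?_
  have hsplit : (1 + c * sinh x ^ 2) ^ (-(1 : ℝ) / 2)
      = (1 + c * sinh x ^ 2) * (1 + c * sinh x ^ 2) ^ (-(3 : ℝ) / 2) := by
    conv_lhs => rw [show -(1 : ℝ) / 2 = 1 + -(3 : ℝ) / 2 by norm_num, rpow_add hU, rpow_one]
  rw [hsplit, show -(1 : ℝ) / 2 - 1 = -(3 : ℝ) / 2 by norm_num]
  ring

lemma hasDerivAt_catL {q a : ℝ} (hq : 0 < q) (ha : 0 < a) :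
    HasDerivAt (catL q) (catLDeriv q a) a := by
  set w : ℝ → ℝ := fun v => (v ^ (2 * q) - 1) ^ (-(1 : ℝ) / 2)
  have hbound : ∀ v ∈ Ioi (1 : ℝ), ∀ x ∈ Ioo (a / 2) (3 * a / 2),
      ‖cosh x * (w v * (1 + v ^ 2 * sinh x ^ 2) ^ (-(3 : ℝ) / 2))‖
        ≤ cosh (3 * a / 2) * (w v * (1 + v ^ 2 * sinh (a / 2) ^ 2) ^ (-(3 : ℝ) / 2)) := by
    rintro v hv x ⟨hx1, hx2⟩
    have hw : 0 < w v := rpow_pos_of_pos (rpow_two_mul_sub_one_pos hq hv) _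
    have hsinh : sinh (a / 2) ^ 2 ≤ sinh x ^ 2 :=
      pow_le_pow_left₀ (sinh_pos_iff.2 (by linarith)).le (sinh_le_sinh.2 hx1.le) 2
    rw [norm_of_nonneg (by positivity)]
    gcongr ?_ * (_ * ?_)
    · rw [cosh_le_cosh, abs_of_pos (by linarith), abs_of_pos (by linarith)]
      exact hx2.le
    · exact rpow_le_rpow_of_nonpos (by positivity) (by gcongr) (by norm_num)
  have h := hasDerivAt_integral_of_dominated_loc_of_deriv_le (μ := volume.restrict (Ioi 1))
    (x₀ := a) (F := fun x v => w v * sinh x * (1 + v ^ 2 * sinh x ^ 2) ^ (-(1 : ℝ) / 2))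
    (F' := fun x v => cosh x * (w v * (1 + v ^ 2 * sinh x ^ 2) ^ (-(3 : ℝ) / 2)))
    (Ioo_mem_nhds (by linarith) (by linarith)) (.of_forall fun x => by fun_prop)
    (((integrableOn_weight_mul_rpow (r := -(1 : ℝ) / 2) hq (sinh_pos_iff.2 ha).ne' (by norm_num)
      (by linarith)).mul_const (sinh a)).congr (.of_forall fun v => by ring))
    (by fun_prop) ((ae_restrict_iff' measurableSet_Ioi).2 (.of_forall hbound))
    ((integrableOn_weight_mul_rpow hq (sinh_pos_iff.2 (half_pos ha)).ne' (by norm_num)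
      (by linarith)).const_mul _)
    (.of_forall fun v x _ => by
      have h := (hasDerivAt_sinh_mul_one_add_mul_sinh_sq_rpow (sq_nonneg v) x).const_mul (w v)
      simp only [← mul_assoc] at h
      exact h.congr_deriv (by ring))
  have hderiv := h.2
  rwa [integral_const_mul] at hderiv

lemma catLDeriv_pos {q a : ℝ} (hq : 0 < q) (ha : 0 < a) : 0 < catLDeriv q a :=
  mul_pos (cosh_pos a)
    (integral_weight_mul_rpow_pos hq (sinh_pos_iff.2 ha).ne' (by norm_num) (by linarith))

lemma strictMonoOn_catL {q : ℝ} (hq : 0 < q) : StrictMonoOn (catL q) (Ioi 0) := by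
  refine strictMonoOn_of_hasDerivWithinAt_pos (f' := catLDeriv q) (convex_Ioi 0)
    (fun a ha => (hasDerivAt_catL hq ha).continuousAt.continuousWithinAt) ?_ ?_ <;>
    rw [interior_Ioi]
  · exact fun a ha => (hasDerivAt_catL hq ha).hasDerivWithinAt
  · exact fun a ha => catLDeriv_pos hq ha

theorem stmt_12 (q : ℝ) (hq : 0 < q) :
    (∀ a : ℝ, 0 < a →
      HasDerivAt (catL q)
        (Real.cosh a *
          ∫ v in Set.Ioi (1 : ℝ),
            (v ^ (2 * q) - 1) ^ (-(1 : ℝ) / 2) *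
              (1 + v ^ 2 * Real.sinh a ^ 2) ^ (-(3 : ℝ) / 2)) a ∧
      0 < Real.cosh a *
          ∫ v in Set.Ioi (1 : ℝ),
            (v ^ (2 * q) - 1) ^ (-(1 : ℝ) / 2) *
              (1 + v ^ 2 * Real.sinh a ^ 2) ^ (-(3 : ℝ) / 2)) ∧
    StrictMonoOn (catL q) (Set.Ioi 0) :=
  ⟨fun _ ha => ⟨hasDerivAt_catL hq ha, catLDeriv_pos hq ha⟩, strictMonoOn_catL hq⟩
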